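/- Let S be a numerical semigroup with S ≠ ℕ and let T = ({m(S)} + S) ∪ {0}. Then T is a numerical semigroup, and moreover m(T) = m(S), F(T) = F(S) + m(S), and C(T) = C(S) + 1. -/
import Mathlib


/-- A numerical semigroup: a subset of ℕ containing 0, closed under addition,
with finite complement. -/
def IsNumSgp (S : Set ℕ) : Prop :=
  0 ∈ S ∧ (∀ a ∈ S, ∀ b ∈ S, a + b ∈ S) ∧ Sᶜ.Finite

/-- Pseudo-Frobenius numbers of `S`. -/
def PF (S : Set ℕ) : Set ℕ :=
  {x | x ∉ S ∧ ∀ s ∈ S, s ≠ 0 → x + s ∈ S}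

/-- `I` is an ideal of `Δ`: nonempty, contained in `Δ`, and `I + Δ ⊆ I`. -/
def IsIdealOf (I Δ : Set ℕ) : Prop :=
  I.Nonempty ∧ I ⊆ Δ ∧ ∀ a ∈ I, ∀ b ∈ Δ, a + b ∈ I

/-- `A` is an i(S)-pertinent set. -/
def IsPertinent (A S : Set ℕ) : Prop :=
  A ⊆ PF S ∧ ∀ a ∈ A, ∀ b ∈ A, a + b ∈ PF S → a + b ∈ A

/-- Iterates 𝒥^k(ℕ): 𝒥^0(ℕ) = {ℕ}, 𝒥^{k+1}(ℕ) = 𝒥(𝒥^k(ℕ)). -/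
def Jiter : ℕ → Set (Set ℕ)
  | 0 => {Set.univ}
  | k + 1 => {S | IsNumSgp S ∧ ∃ Δ ∈ Jiter k, IsIdealOf (S \ {0}) Δ}

/-- An i-chain of length `n` connecting `S` and `T`. -/
def IsIChain (n : ℕ) (c : ℕ → Set ℕ) (S T : Set ℕ) : Prop :=
  c 0 = S ∧ c n = T ∧ (∀ i ≤ n, IsNumSgp (c i)) ∧
    ∀ i < n, c i ⊆ c (i + 1) ∧ IsIdealOf (c i \ {0}) (c (i + 1))

/-- The complexity of a numerical semigroup. -/
noncomputable def complexity (S : Set ℕ) : ℕ := sInf {k | S ∈ Jiter k}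

/-- The multiplicity: the least nonzero element. -/
noncomputable def mult (S : Set ℕ) : ℕ := sInf (S \ {0})

/-- The Frobenius number, as an integer: the largest integer not in `S`. -/
noncomputable def Frob (S : Set ℕ) : ℤ := sSup {z : ℤ | ¬ ∃ n ∈ S, (n : ℤ) = z}

/-- Ordinary numerical semigroup. -/
def IsOrdinary (S : Set ℕ) : Prop := S = {0} ∪ {x : ℕ | mult S ≤ x}

/-- The set γ(S) = {x ∈ ℕ \ S : ⌊F(S)/m(S)⌋·m(S) ≤ x ≤ F(S)}. -/
noncomputable def gamma (S : Set ℕ) : Set ℕ :=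
  {x : ℕ | x ∉ S ∧ ⌊(Frob S : ℚ) / (mult S : ℚ)⌋ * (mult S : ℤ) ≤ (x : ℤ) ∧ (x : ℤ) ≤ Frob S}

/-- The minimal system of generators of `T`: the elements of `T` that are not
generated by the other elements. -/
def msg (T : Set ℕ) : Set ℕ :=
  {x ∈ T | x ∉ (AddSubmonoid.closure (T \ {x}) : Set ℕ)}

lemma numSgp_univ : IsNumSgp Set.univ :=
  ⟨trivial, fun _ _ _ _ => trivial, by simp⟩

lemma univ_mem_jiter : ∀ k, Set.univ ∈ Jiter k
  | 0 => rfl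
  | k+1 => ⟨numSgp_univ, Set.univ, univ_mem_jiter k,
      ⟨1, by simp⟩, fun x _ => trivial, fun a ha b _ => by simp at ha ⊢; omega⟩

lemma jiter_numSgp {k : ℕ} {S : Set ℕ} (h : S ∈ Jiter k) : IsNumSgp S := by
  cases k with
  | zero => rw [show S = Set.univ from h]; exact numSgp_univ
  | succ k => exact h.1

lemma eq_univ_of_one_mem {S : Set ℕ} (hS : IsNumSgp S) (h1 : 1 ∈ S) : S = Set.univ := by
  ext x; simp only [Set.mem_univ, iff_true]
  induction x with
  | zero => exact hS.1
  | succ n ih => exact hS.2.1 n ih 1 h1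

lemma exists_frobN {S : Set ℕ} (hS : IsNumSgp S) (hne : S ≠ Set.univ) :
    ∃ F₀ : ℕ, F₀ ∉ S ∧ ∀ x : ℕ, F₀ < x → x ∈ S := by
  have hfin := hS.2.2
  have hne' : Sᶜ.Nonempty := by rwa [Set.nonempty_compl]
  have hnef : hfin.toFinset.Nonempty := by
    rwa [Set.Finite.toFinset_nonempty]
  refine ⟨hfin.toFinset.max' hnef, ?_, ?_⟩
  · have := hfin.toFinset.max'_mem hnef
    rw [Set.Finite.mem_toFinset] at this
    exact this
  · intro x hx
    by_contra hxS
    have : x ∈ hfin.toFinset := by rwa [Set.Finite.mem_toFinset]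
    exact absurd (hfin.toFinset.le_max' x this) (by omega)

lemma frob_eq {S : Set ℕ} (F₀ : ℕ) (h1 : F₀ ∉ S) (h2 : ∀ x : ℕ, F₀ < x → x ∈ S) :
    Frob S = (F₀ : ℤ) := by
  apply IsGreatest.csSup_eq
  constructor
  · rintro ⟨n, hn, he⟩
    have : n = F₀ := by exact_mod_cast he
    exact h1 (this ▸ hn)
  · intro z hz
    by_contra h
    push_neg at h
    refine hz ⟨z.toNat, h2 z.toNat (by omega), by omega⟩

lemma frob_univ : Frob Set.univ = -1 := by
  apply IsGreatest.csSup_eq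
  constructor
  · rintro ⟨n, -, he⟩; omega
  · intro z hz
    by_contra h
    push_neg at h
    exact hz ⟨z.toNat, trivial, by omega⟩

lemma mult_spec {S : Set ℕ} (hS : IsNumSgp S) (hne : S ≠ Set.univ) :
    mult S ∈ S ∧ mult S ≠ 0 ∧ ∀ s ∈ S, s ≠ 0 → mult S ≤ s := by
  obtain ⟨F₀, h1, h2⟩ := exists_frobN hS hne
  have hne' : (S \ {0}).Nonempty := ⟨F₀ + 1, h2 _ (by omega), by simp⟩
  have hm : sInf (S \ {0}) ∈ S \ {0} := Nat.sInf_mem hne'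
  exact ⟨hm.1, fun h => hm.2 (Set.mem_singleton_iff.mpr h), fun s hs hs0 => Nat.sInf_le ⟨hs, by simpa⟩⟩

lemma mult_le {Δ : Set ℕ} {x : ℕ} (h : x ∈ Δ) (h0 : x ≠ 0) : mult Δ ≤ x :=
  Nat.sInf_le ⟨h, by simpa⟩

lemma badSet_bddAbove {S : Set ℕ} (hS : IsNumSgp S) :
    BddAbove {z : ℤ | ¬ ∃ n ∈ S, (n : ℤ) = z} := by
  obtain ⟨N, hN⟩ := hS.2.2.bddAbove
  refine ⟨(N : ℤ), fun z hz => ?_⟩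
  by_contra h
  push_neg at h
  refine hz ⟨z.toNat, ?_, by omega⟩
  by_contra hmem
  have : z.toNat ≤ N := hN hmem
  omega

lemma mem_jiter_iff : ∀ (k : ℕ) (S : Set ℕ), IsNumSgp S →
    (S ∈ Jiter k ↔ Frob S < (k : ℤ) * (mult S : ℤ)) := by
  intro k
  induction k with
  | zero =>
    intro S hS
    constructor
    · intro h
      rw [show S = Set.univ from h, frob_univ]
      simp
    · intro h
      by_contra hne
      have hne' : S ≠ Set.univ := fun he => hne (by rw [he]; exact univ_mem_jiter 0)
      obtain ⟨F₀, h1, h2⟩ := exists_frobN hS hne'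
      rw [frob_eq F₀ h1 h2] at h
      simp at h
      omega
  | succ k ih =>
    intro S hS
    constructor
    · rintro ⟨-, Δ, hΔk, hidne, hidsub, hidadd⟩
      have hΔ := jiter_numSgp hΔk
      have hΔfrob := (ih Δ hΔ).mp hΔk
      by_cases hne : S = Set.univ
      · subst hne
        rw [frob_univ]
        have : (0:ℤ) ≤ ((k+1 : ℕ) : ℤ) * (mult Set.univ : ℤ) := by positivity
        omega
      · obtain ⟨F₀, hF1, hF2⟩ := exists_frobN hS hne
        rw [frob_eq F₀ hF1 hF2]
        obtain ⟨hmS, hm0, hmmin⟩ := mult_spec hS hne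
        set m := mult S with hm
        have hmΔ : m ∈ Δ := hidsub ⟨hmS, by simpa⟩
        have hmultΔ : mult Δ ≤ m := mult_le hmΔ hm0
        have hbad : ((F₀ : ℤ) - m) ∈ {z : ℤ | ¬ ∃ n ∈ Δ, (n : ℤ) = z} := by
          rintro ⟨n, hnΔ, he⟩
          have hsum : m + n ∈ S \ {0} := hidadd m ⟨hmS, by simpa⟩ n hnΔ
          have : m + n = F₀ := by omega
          exact hF1 (this ▸ hsum.1)
        have hle : (F₀ : ℤ) - m ≤ Frob Δ := le_csSup (badSet_bddAbove hΔ) hbad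
        have hmono : (k:ℤ) * (mult Δ : ℤ) ≤ (k:ℤ) * (m : ℤ) := by
          apply mul_le_mul_of_nonneg_left (by exact_mod_cast hmultΔ) (by positivity)
        push_cast
        linarith
    · intro hfrob
      by_cases hne : S = Set.univ
      · subst hne; exact univ_mem_jiter _
      obtain ⟨F₀, hF1, hF2⟩ := exists_frobN hS hne
      rw [frob_eq F₀ hF1 hF2] at hfrob
      obtain ⟨hmS, hm0, hmmin⟩ := mult_spec hS hne
      set m := mult S with hm
      have hFm : F₀ < (k+1) * m := by exact_mod_cast hfrob
      set t := F₀ - m with ht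
      set Δ := S ∪ {x : ℕ | t < x} with hΔdef
      have hΔ : IsNumSgp Δ := by
        refine ⟨Set.mem_union_left _ hS.1, ?_, ?_⟩
        · rintro a (haS | hat) b (hbS | hbt)
          · exact Set.mem_union_left _ (hS.2.1 a haS b hbS)
          · rcases Nat.eq_zero_or_pos a with h0 | h0
            · subst h0; rw [zero_add]; exact Set.mem_union_right _ hbt
            · refine Set.mem_union_right _ ?_
              simp only [Set.mem_setOf_eq] at hbt ⊢; omega
          · rcases Nat.eq_zero_or_pos b with h0 | h0
            · subst h0; rw [add_zero]; exact Set.mem_union_right _ hat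
            · refine Set.mem_union_right _ ?_
              simp only [Set.mem_setOf_eq] at hat ⊢; omega
          · refine Set.mem_union_right _ ?_
            simp only [Set.mem_setOf_eq] at hat hbt ⊢; omega
        · apply Set.Finite.subset (Set.finite_Iic t)
          intro x hx
          have : ¬ (t < x) := fun h => hx (Set.mem_union_right _ h)
          simp only [Set.mem_Iic]; omega
      have hideal : IsIdealOf (S \ {0}) Δ := by
        refine ⟨⟨m, hmS, by simpa⟩, fun x hx => Set.mem_union_left _ hx.1, ?_⟩
        rintro a ⟨haS, ha0⟩ b hb
        have ha0' : a ≠ 0 := by simpa using ha0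
        rcases hb with hbS | hbt
        · refine ⟨hS.2.1 a haS b hbS, by simp; omega⟩
        · have hbt' : t < b := hbt
          have ham : m ≤ a := hmmin a haS ha0'
          have hgt : F₀ < a + b := by omega
          exact ⟨hF2 _ hgt, by simp; omega⟩
      have hΔk : Δ ∈ Jiter k := by
        by_cases hΔu : Δ = Set.univ
        · rw [hΔu]; exact univ_mem_jiter k
        · have ht1 : 1 ≤ t := by
            by_contra h
            apply hΔu
            have ht0 : t = 0 := by omega
            apply Set.eq_univ_of_forall
            intro x
            rcases Nat.eq_zero_or_pos x with h0 | h0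
            · exact h0 ▸ Set.mem_union_left _ hS.1
            · exact Set.mem_union_right _ (by simp only [Set.mem_setOf_eq]; omega)
          have hmF : m + 1 ≤ F₀ := by omega
          obtain ⟨G, hG1, hG2⟩ := exists_frobN hΔ hΔu
          rw [ih Δ hΔ, frob_eq G hG1 hG2]
          have hGt : G ≤ t := by
            by_contra h
            exact hG1 (Set.mem_union_right _ (by simp only [Set.mem_setOf_eq]; omega))
          obtain ⟨hμΔ, hμ0, -⟩ := mult_spec hΔ hΔu
          set μ := mult Δ with hμ
          have hk1 : 1 ≤ k := by
            by_contra h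
            have hk0 : k = 0 := by omega
            rw [hk0] at hFm
            norm_num at hFm
            omega
          have hFm' : F₀ < k * m + m := by rw [Nat.succ_mul] at hFm; exact hFm
          have hgoal : G < k * μ := by
            rcases hμΔ with hμS | hμt
            · have hμm : m ≤ μ := hmmin μ hμS hμ0
              have htkm : t < k * m := by
                rw [ht, tsub_lt_iff_right (by omega)]
                omega
              calc G ≤ t := hGt
                _ < k * m := htkm
                _ ≤ k * μ := Nat.mul_le_mul_left k hμm
            · have hμt' : t < μ := hμt
              calc G ≤ t := hGt
                _ < μ := hμt'
                _ ≤ k * μ := Nat.le_mul_of_pos_left μ hk1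
          exact_mod_cast hgoal
      exact ⟨hS, Δ, hΔk, hideal⟩

lemma complexity_eq {S : Set ℕ} (hS : IsNumSgp S) (F₀ : ℕ) (h1 : F₀ ∉ S)
    (h2 : ∀ x : ℕ, F₀ < x → x ∈ S) : complexity S = F₀ / mult S + 1 := by
  have hne : S ≠ Set.univ := fun h => h1 (h ▸ trivial)
  obtain ⟨hmS, hm0, hmmin⟩ := mult_spec hS hne
  set m := mult S with hm
  have hmpos : 0 < m := Nat.pos_of_ne_zero hm0
  have hset : {k : ℕ | S ∈ Jiter k} = {k : ℕ | F₀ < k * m} := by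
    ext k
    rw [Set.mem_setOf_eq, Set.mem_setOf_eq, mem_jiter_iff k S hS, frob_eq F₀ h1 h2]
    constructor <;> intro h <;> exact_mod_cast h
  unfold complexity
  rw [hset]
  set q := F₀ / m with hq
  have hq1 : F₀ < (q + 1) * m := by
    have e1 : m * q + F₀ % m = F₀ := Nat.div_add_mod F₀ m
    have e2 : F₀ % m < m := Nat.mod_lt _ hmpos
    have e3 : (q + 1) * m = m * q + m := by ring
    omega
  have hq1' : q + 1 ∈ {k : ℕ | F₀ < k * m} := hq1
  apply le_antisymm
  · exact Nat.sInf_le hq1'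
  · refine le_csInf ⟨q + 1, hq1'⟩ fun k hk => ?_
    have : q < k := by
      rw [hq]
      exact (Nat.div_lt_iff_lt_mul hmpos).mpr hk
    omega

/-- if `S ≠ ℕ` and `T = ({m(S)} + S) ∪ {0}`, then `T` is a
numerical semigroup with `m(T) = m(S)`, `F(T) = F(S) + m(S)` and `C(T) = C(S) + 1`. -/
theorem stmt18 (S : Set ℕ) (hS : IsNumSgp S) (hne : S ≠ Set.univ) :
    IsNumSgp ((fun s => mult S + s) '' S ∪ {0}) ∧
    mult ((fun s => mult S + s) '' S ∪ {0}) = mult S ∧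
    Frob ((fun s => mult S + s) '' S ∪ {0}) = Frob S + (mult S : ℤ) ∧
    complexity ((fun s => mult S + s) '' S ∪ {0}) = complexity S + 1 := by
  obtain ⟨F₀, hF1, hF2⟩ := exists_frobN hS hne
  obtain ⟨hmS, hm0, hmmin⟩ := mult_spec hS hne
  set m := mult S with hmdef
  set T := (fun s => m + s) '' S ∪ {0} with hT
  have hmpos : 0 < m := Nat.pos_of_ne_zero hm0
  have hT0 : (0:ℕ) ∈ T := Set.mem_union_right _ rfl
  have hTF2 : ∀ x : ℕ, F₀ + m < x → x ∈ T := by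
    intro x hx
    exact Set.mem_union_left _ ⟨x - m, hF2 _ (by omega), by simp; omega⟩
  have hTF1 : F₀ + m ∉ T := by
    rintro (⟨s, hs, he⟩ | h0)
    · simp only at he
      have : s = F₀ := by omega
      exact hF1 (this ▸ hs)
    · simp at h0; omega
  have hTnum : IsNumSgp T := by
    refine ⟨hT0, ?_, ?_⟩
    · rintro a (⟨s, hs, rfl⟩ | ha0) b hb
      · rcases hb with ⟨s', hs', rfl⟩ | hb0
        · refine Set.mem_union_left _ ⟨s + (m + s'), hS.2.1 s hs _ (hS.2.1 m hmS s' hs'), ?_⟩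
          simp; ring
        · simp at hb0; subst hb0
          exact Set.mem_union_left _ ⟨s, hs, by simp⟩
      · simp at ha0; subst ha0
        simpa using hb
    · apply Set.Finite.subset (Set.finite_Iic (F₀ + m))
      intro x hx
      have : ¬ (F₀ + m < x) := fun h => hx (hTF2 x h)
      simp only [Set.mem_Iic]; omega
  have hTne : T ≠ Set.univ := fun h => hTF1 (h ▸ trivial)
  have hmultT : mult T = m := by
    apply le_antisymm
    · exact mult_le (Set.mem_union_left _ ⟨0, hS.1, by simp⟩) hm0
    · refine le_csInf ⟨m, Set.mem_union_left _ ⟨0, hS.1, by simp⟩, by simpa⟩ ?_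
      rintro x ⟨hx, hx0⟩
      have hx0' : x ≠ 0 := by simpa using hx0
      rcases hx with ⟨s, -, rfl⟩ | h0
      · simp
      · simp at h0; omega
  refine ⟨hTnum, hmultT, ?_, ?_⟩
  · rw [frob_eq (F₀ + m) hTF1 hTF2, frob_eq F₀ hF1 hF2]
    push_cast; ring
  · rw [complexity_eq hTnum (F₀ + m) hTF1 hTF2, complexity_eq hS F₀ hF1 hF2, hmultT,
      ← hmdef, Nat.add_div_right F₀ hmpos]
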